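/- arXiv:1808.10671 — 3 statements merged into one kernel-verified Lean document; each statement's English description precedes it below -/
import Mathlib

section
/- Assume μ ≠ δ_{2/3} and let x ∈ M₁₂ \ {C, c}. Then P(lim_{n→∞} φ_n(x,·) = C) > 0 if and only if E log(1/3 + Θ) < 0, and P(lim_{n→∞} φ_n(x,·) = c) > 0 if and only if E log(2 − (3/2)Θ) < 0. (Theorem 2.2 b.) -/
open MeasureTheory ProbabilityTheory Filter Topology
open scoped ENNReal

noncomputable section

/-- The cubic stochastic operator `V_θ`, regarded as a map on (Euclidean) `ℝ³`. -/
def Vcso (θ : ℝ) (x : EuclideanSpace ℝ (Fin 3)) : EuclideanSpace ℝ (Fin 3) :=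
  !₂[x 0 * ((x 0)^2 + 3*θ*(x 0)*(x 1 + x 2) + 3*(1-θ)*((x 1)^2 + (x 2)^2) + 2*(x 1)*(x 2)),
    x 1 * ((x 1)^2 + 3*θ*(x 1)*(x 2 + x 0) + 3*(1-θ)*((x 2)^2 + (x 0)^2) + 2*(x 2)*(x 0)),
    x 2 * ((x 2)^2 + 3*θ*(x 2)*(x 0 + x 1) + 3*(1-θ)*((x 0)^2 + (x 1)^2) + 2*(x 0)*(x 1))]

/-- The simplex `Δ² = {x ∈ ℝ³ : x₁,x₂,x₃ ≥ 0, x₁+x₂+x₃ = 1}`. -/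
def simplex2 : Set (EuclideanSpace ℝ (Fin 3)) :=
  {x | 0 ≤ x 0 ∧ 0 ≤ x 1 ∧ 0 ≤ x 2 ∧ x 0 + x 1 + x 2 = 1}

/-- The random orbit `φ_n(x) = V_{θ_n} ∘ ⋯ ∘ V_{θ_1}(x)` driven by the sequence
`θ_1, θ_2, … = θs 0, θs 1, …`. -/
def phiRDS (θs : ℕ → ℝ) : ℕ → EuclideanSpace ℝ (Fin 3) → EuclideanSpace ℝ (Fin 3)
  | 0, x => x
  | n+1, x => Vcso (θs n) (phiRDS θs n x)

/-- The vertex `e₁ = (1,0,0)`. -/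
def e1 : EuclideanSpace ℝ (Fin 3) := !₂[1, 0, 0]

/-- The vertex `c = (1/2,1/2,0)`. -/
def cpt : EuclideanSpace ℝ (Fin 3) := !₂[1/2, 1/2, 0]

/-- The vertex `C = (1/3,1/3,1/3)`. -/
def Cpt : EuclideanSpace ℝ (Fin 3) := !₂[1/3, 1/3, 1/3]

/-- `G₁ = {y ∈ Δ² : y₁ ≥ y₂ ≥ y₃}`. -/
def G1 : Set (EuclideanSpace ℝ (Fin 3)) :=
  {y ∈ simplex2 | y 0 ≥ y 1 ∧ y 1 ≥ y 2}

/-- The interior of `G₁`: `{y ∈ Δ² : y₁ > y₂ > y₃ > 0}`. -/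
def intG1 : Set (EuclideanSpace ℝ (Fin 3)) :=
  {y ∈ simplex2 | y 0 > y 1 ∧ y 1 > y 2 ∧ y 2 > 0}

/-- The edge `M₁₂ = {y ∈ Δ² : y₁ = y₂ ≥ y₃}`. -/
def M12 : Set (EuclideanSpace ℝ (Fin 3)) :=
  {y ∈ simplex2 | y 0 = y 1 ∧ y 1 ≥ y 2}

/-- The edge `M₂₃ = {y ∈ Δ² : y₁ ≥ y₂ = y₃}`. -/
def M23 : Set (EuclideanSpace ℝ (Fin 3)) :=
  {y ∈ simplex2 | y 0 ≥ y 1 ∧ y 1 = y 2}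

/-- The edge `Γ₁₂ = {y ∈ Δ² : y₁ ≥ y₂, y₃ = 0}`. -/
def Gamma12 : Set (EuclideanSpace ℝ (Fin 3)) :=
  {y ∈ simplex2 | y 0 ≥ y 1 ∧ y 2 = 0}

/-- The seven fixed points `𝒜`. -/
def fixedA : Set (EuclideanSpace ℝ (Fin 3)) :=
  {!₂[1,0,0], !₂[0,1,0], !₂[0,0,1], !₂[1/2,1/2,0], !₂[1/2,0,1/2], !₂[0,1/2,1/2], !₂[1/3,1/3,1/3]}

/-- Positive part of `log t`, valued in `ℝ≥0∞`. -/
def logPos (t : ℝ) : ℝ≥0∞ := ENNReal.ofReal (Real.log t)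

/-- Negative part of the extended logarithm (with `log 0 = -∞`), valued in `ℝ≥0∞`. -/
def logNeg (t : ℝ) : ℝ≥0∞ := if t ≤ 0 then ⊤ else ENNReal.ofReal (-Real.log t)

/-- `E log g(Θ) < 0` in the extended sense (the value `-∞` is allowed), where `Θ` has law `μ`:
the positive part of the extended expectation is strictly smaller than the negative part. -/
def expLogNeg (μ : Measure ℝ) (g : ℝ → ℝ) : Prop :=
  ∫⁻ θ, logPos (g θ) ∂μ < ∫⁻ θ, logNeg (g θ) ∂μ

/-- `E log g(Θ) ≤ r` in the extended sense (the value `-∞` is allowed), where `Θ` has law `μ`. -/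
def expLogLe (μ : Measure ℝ) (g : ℝ → ℝ) (r : ℝ) : Prop :=
  ∫⁻ θ, logPos (g θ) ∂μ + ENNReal.ofReal (-r) ≤ ∫⁻ θ, logNeg (g θ) ∂μ + ENNReal.ofReal r

/-- The topological support of a measure on `ℝ`: points all of whose open neighborhoods
have positive measure. -/
def measSupport (μ : Measure ℝ) : Set ℝ :=
  {t : ℝ | ∀ U : Set ℝ, IsOpen U → t ∈ U → 0 < μ U}

/-!
On `M₁₂` the third coordinate `z ∈ (0, 1/3)` evolves by `z ↦ z ((1 - σ z) + σ z X)` with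
`σ z = (1 - 3z)(1 - z)` and noise `X = 2 - 3Θ/2`, and the distance `1/3 - z` to `C` by a map of
the same kind with noise `1/3 + Θ`; convergence to `c` resp. `C` means that the corresponding
coordinate tends to `0`. For such a map with `σ → 1` at `0` and i.i.d. noise `X ∈ [a, b]`,
`log y` moves near `0` like the random walk with steps `log X`.
If `E log X ≥ 0`, concavity of `log` makes `log y_n` a submartingale with bounded increments;
it is bounded above, so by the one-sided martingale convergence theorem it almost surely does not
tend to `-∞`. If `E log X < 0`, the strong law of large numbers bounds the partial sums of
`log X` by `B - εn` with positive probability; finitely many initial steps with `X ≤ 1 - η` have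
positive probability, are independent of the later noise, and bring `y` low enough to follow that
random walk down to `0`.
-/

open Set Finset Real

section ConvexCombination

variable {s x : ℝ}

lemma one_sub_add_mul_pos (hs : s ∈ Icc (0 : ℝ) 1) (hx : 0 < x) : 0 < 1 - s + s * x := by
  rcases le_total x 1 with h | h <;>
    nlinarith [mul_nonneg (sub_nonneg.2 hs.2) (sub_nonneg.2 h), mul_nonneg hs.1 (sub_nonneg.2 h)]

lemma mul_log_le_log_one_sub_add_mul (hs : s ∈ Icc (0 : ℝ) 1) (hx : 0 < x) :
    s * log x ≤ log (1 - s + s * x) := by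
  have := strictConcaveOn_log_Ioi.concaveOn.2 (mem_Ioi.2 one_pos) (mem_Ioi.2 hx)
    (sub_nonneg.2 hs.2) hs.1 (sub_add_cancel 1 s)
  simpa using this

lemma abs_log_one_sub_add_mul_le (hs : s ∈ Icc (0 : ℝ) 1) (hx : 0 < x) :
    |log (1 - s + s * x)| ≤ |log x| := by
  have hr := one_sub_add_mul_pos hs hx
  rcases le_total 1 x with h | h
  · have h1 : 1 ≤ 1 - s + s * x := by nlinarith [hs.1]
    rw [abs_of_nonneg (log_nonneg h1), abs_of_nonneg (log_nonneg h)]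
    exact log_le_log hr (by nlinarith [hs.2])
  · have h1 : 1 - s + s * x ≤ 1 := by nlinarith [hs.1]
    rw [abs_of_nonpos (log_nonpos hr.le h1), abs_of_nonpos (log_nonpos hx.le h)]
    exact neg_le_neg (log_le_log hx (by nlinarith [hs.2]))

lemma one_sub_add_mul_le_mul_exp {a τ : ℝ} (ha : 0 < a) (hax : a ≤ x) (hs : s ≤ 1)
    (hτ : 1 - s ≤ τ) : 1 - s + s * x ≤ x * exp (τ / a) := by
  have hx : 0 < x := ha.trans_le hax
  have hτ0 : 0 ≤ τ := by linarith
  calc 1 - s + s * x ≤ x + τ := by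
        rcases le_total 1 x with h | h <;> nlinarith
    _ ≤ x * (τ / a + 1) := by
        have : 1 ≤ x / a := (one_le_div ha).2 hax
        have : x * (τ / a) = τ * (x / a) := by ring
        nlinarith
    _ ≤ x * exp (τ / a) := mul_le_mul_of_nonneg_left (add_one_le_exp _) hx.le

lemma abs_log_le_max_of_mem_Icc {a b x : ℝ} (ha : 0 < a) (hx : x ∈ Icc a b) :
    |log x| ≤ max |log a| |log b| :=
  abs_le_max_abs_abs (log_le_log ha hx.1) (log_le_log (ha.trans_le hx.1) hx.2)

end ConvexCombination

def mixStep (σ : ℝ → ℝ) (x y : ℝ) : ℝ := y * (1 - σ y + σ y * x)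

def mixOrbit (σ : ℝ → ℝ) (y₀ : ℝ) (x : ℕ → ℝ) : ℕ → ℝ
  | 0 => y₀
  | n + 1 => mixStep σ (x n) (mixOrbit σ y₀ x n)

structure IsMixWeight (σ : ℝ → ℝ) (a b c : ℝ) : Prop where
  mem_Icc : ∀ y ∈ Ioc 0 c, σ y ∈ Icc (0 : ℝ) 1
  mixStep_le : ∀ x ∈ Icc a b, ∀ y ∈ Ioc 0 c, mixStep σ x y ≤ c

section MixOrbit

variable {σ : ℝ → ℝ} {a b c y₀ : ℝ} {x : ℕ → ℝ}

lemma IsMixWeight.mixStep_mem_Ioc (hσ : IsMixWeight σ a b c) (ha : 0 < a) {x y : ℝ}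
    (hx : x ∈ Icc a b) (hy : y ∈ Ioc 0 c) : mixStep σ x y ∈ Ioc 0 c :=
  ⟨mul_pos hy.1 (one_sub_add_mul_pos (hσ.mem_Icc y hy) (ha.trans_le hx.1)),
    hσ.mixStep_le x hx y hy⟩

lemma IsMixWeight.mixOrbit_mem_Ioc (hσ : IsMixWeight σ a b c) (ha : 0 < a)
    (hx : ∀ n, x n ∈ Icc a b) (hy₀ : y₀ ∈ Ioc 0 c) (n : ℕ) : mixOrbit σ y₀ x n ∈ Ioc 0 c := by
  induction n with
  | zero => exact hy₀
  | succ n ih => exact hσ.mixStep_mem_Ioc ha (hx n) ih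

lemma measurable_mixOrbit {Ω : Type*} {m : MeasurableSpace Ω} (hσ : Measurable σ)
    {X : ℕ → Ω → ℝ} {n : ℕ} (hX : ∀ k < n, Measurable[m] (X k)) :
    Measurable[m] fun ω ↦ mixOrbit σ y₀ (X · ω) n := by
  induction n with
  | zero => exact measurable_const
  | succ n ih =>
    have hY := ih fun k hk ↦ hX k (hk.trans n.lt_succ_self)
    exact hY.mul ((measurable_const.sub (hσ.comp hY)).add
      ((hσ.comp hY).mul (hX n n.lt_succ_self)))

lemma mixOrbit_le_mul_pow (hσ : IsMixWeight σ a b c) (ha : 0 < a) (hx : ∀ n, x n ∈ Icc a b)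
    (hy₀ : y₀ ∈ Ioc 0 c) (hanti : AntitoneOn σ (Ioc 0 c)) {η : ℝ} (hη : η ∈ Icc (0 : ℝ) 1)
    {m : ℕ} (hgap : ∀ k < m, x k ≤ 1 - η) :
    ∀ k ≤ m, mixOrbit σ y₀ x k ≤ y₀ * (1 - σ y₀ * η) ^ k := by
  have hσy₀ := hσ.mem_Icc y₀ hy₀
  have hρ : 0 ≤ 1 - σ y₀ * η := by nlinarith [hσy₀.2, hη.1, hη.2]
  intro k
  induction k with
  | zero => simp [mixOrbit]
  | succ k ih =>
    intro hk
    have hYk := hσ.mixOrbit_mem_Ioc ha hx hy₀ k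
    have hk_le := ih (by omega)
    have hYy₀ : mixOrbit σ y₀ x k ≤ y₀ :=
      hk_le.trans (mul_le_of_le_one_right hy₀.1.le (pow_le_one₀ hρ (by nlinarith [hσy₀.1, hη.1])))
    have hσY := hσ.mem_Icc _ hYk
    have hfactor : 1 - σ (mixOrbit σ y₀ x k) + σ (mixOrbit σ y₀ x k) * x k ≤ 1 - σ y₀ * η := by
      have := hanti hYk hy₀ hYy₀
      nlinarith [mul_le_mul_of_nonneg_left (hgap k (by omega)) hσY.1,
        mul_le_mul_of_nonneg_right this hη.1]
    calc mixOrbit σ y₀ x (k + 1)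
        ≤ y₀ * (1 - σ y₀ * η) ^ k * (1 - σ y₀ * η) :=
          mul_le_mul hk_le hfactor
            (one_sub_add_mul_pos hσY (ha.trans_le (hx k).1)).le (hYk.1.le.trans hk_le)
      _ = y₀ * (1 - σ y₀ * η) ^ (k + 1) := by ring

lemma IsMixWeight.log_mixOrbit_succ (hσ : IsMixWeight σ a b c) (ha : 0 < a)
    (hx : ∀ n, x n ∈ Icc a b) (hy₀ : y₀ ∈ Ioc 0 c) (n : ℕ) :
    log (mixOrbit σ y₀ x (n + 1)) = log (mixOrbit σ y₀ x n) +
      log (1 - σ (mixOrbit σ y₀ x n) + σ (mixOrbit σ y₀ x n) * x n) :=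
  have hY := hσ.mixOrbit_mem_Ioc ha hx hy₀ n
  log_mul hY.1.ne' (one_sub_add_mul_pos (hσ.mem_Icc _ hY) (ha.trans_le (hx n).1)).ne'

lemma IsMixWeight.abs_log_mixOrbit_succ_sub_le (hσ : IsMixWeight σ a b c) (ha : 0 < a)
    (hx : ∀ n, x n ∈ Icc a b) (hy₀ : y₀ ∈ Ioc 0 c) (n : ℕ) :
    |log (mixOrbit σ y₀ x (n + 1)) - log (mixOrbit σ y₀ x n)| ≤ max |log a| |log b| := by
  rw [hσ.log_mixOrbit_succ ha hx hy₀, add_sub_cancel_left]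
  exact (abs_log_one_sub_add_mul_le (hσ.mem_Icc _ (hσ.mixOrbit_mem_Ioc ha hx hy₀ n))
    (ha.trans_le (hx n).1)).trans (abs_log_le_max_of_mem_Icc ha (hx n))

lemma IsMixWeight.abs_log_mixOrbit_le (hσ : IsMixWeight σ a b c) (ha : 0 < a)
    (hx : ∀ n, x n ∈ Icc a b) (hy₀ : y₀ ∈ Ioc 0 c) (n : ℕ) :
    |log (mixOrbit σ y₀ x n)| ≤ |log y₀| + n * max |log a| |log b| := by
  induction n with
  | zero => simp [mixOrbit]
  | succ n ih =>
    have := abs_sub_le_iff.1 (hσ.abs_log_mixOrbit_succ_sub_le ha hx hy₀ n)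
    rw [abs_le] at ih ⊢
    push_cast
    constructor <;> linarith [ih.1, ih.2, this.1, this.2]

end MixOrbit

lemma tendsto_zero_of_le_mul_exp {y u : ℕ → ℝ} {y' ε B : ℝ} (hε : 0 < ε) (hy : ∀ n, 0 < y n)
    (hstep : ∀ n, y n ≤ y' → y (n + 1) ≤ y n * exp (u n + ε / 2))
    (hS : ∀ n, ∑ k ∈ range n, u k + ε * n ≤ B) (hy0 : y 0 ≤ y' * exp (-B)) :
    Tendsto y atTop (𝓝 0) := by
  have hdrift : ∀ n : ℕ, ∑ k ∈ range n, u k + ε * n / 2 ≤ B - ε * n / 2 := fun n ↦ by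
    linarith [hS n]
  have hbound : ∀ n, y n ≤ y 0 * exp (∑ k ∈ range n, u k + ε * n / 2) := by
    intro n
    induction n with
    | zero => simp
    | succ n ih =>
      have hn : y n ≤ y' := calc
        y n ≤ y 0 * exp B := ih.trans (mul_le_mul_of_nonneg_left
          (exp_le_exp.2 ((hdrift n).trans (by have := n.cast_nonneg (α := ℝ); nlinarith)))
          (hy 0).le)
        _ ≤ y' := by rwa [← le_mul_inv_iff₀ (exp_pos B), ← exp_neg]
      calc y (n + 1) ≤ y n * exp (u n + ε / 2) := hstep n hn
        _ ≤ y 0 * exp (∑ k ∈ range n, u k + ε * n / 2) * exp (u n + ε / 2) :=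
          mul_le_mul_of_nonneg_right ih (exp_pos _).le
        _ = y 0 * exp (∑ k ∈ range (n + 1), u k + ε * ↑(n + 1) / 2) := by
          rw [mul_assoc, ← exp_add, sum_range_succ]; push_cast; ring_nf
  have hlim : Tendsto (fun n : ℕ ↦ y 0 * exp (B - ε * n / 2)) atTop (𝓝 0) := by
    have : Tendsto (fun n : ℕ ↦ B - ε * n / 2) atTop atBot :=
      tendsto_atBot_add_const_left _ B (tendsto_neg_atTop_atBot.comp
        ((tendsto_natCast_atTop_atTop.const_mul_atTop hε).atTop_div_const two_pos)) |>.congr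
        fun n ↦ by simp [sub_eq_add_neg]
    simpa using (tendsto_exp_atBot.comp this).const_mul (y 0)
  exact squeeze_zero (fun n ↦ (hy n).le)
    (fun n ↦ (hbound n).trans (mul_le_mul_of_nonneg_left (exp_le_exp.2 (hdrift n)) (hy 0).le)) hlim

/-- `m` steps with `x ≤ 1 - η` bring the orbit below a threshold under which `σ` is so close to `1`
that `log` of the orbit stays below the partial sums of `log x` plus `εn/2`. -/
lemma exists_tendsto_mixOrbit_zero {σ : ℝ → ℝ} {a b c y₀ : ℝ} (hσ : IsMixWeight σ a b c)
    (ha : 0 < a) (hy₀ : y₀ ∈ Ioc 0 c) (hanti : AntitoneOn σ (Ioc 0 c))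
    (hσ1 : Tendsto σ (𝓝[>] 0) (𝓝 1)) (hσy₀ : 0 < σ y₀) {η : ℝ} (hη : η ∈ Ioc (0 : ℝ) 1)
    {ε : ℝ} (hε : 0 < ε) (B : ℝ) :
    ∃ m : ℕ, ∀ x : ℕ → ℝ, (∀ n, x n ∈ Icc a b) → (∀ k < m, x k ≤ 1 - η) →
      (∀ n, ∑ k ∈ range n, log (x (m + k)) + ε * n ≤ B) →
      Tendsto (mixOrbit σ y₀ x) atTop (𝓝 0) := by
  have hτ : 0 < a * ε / 2 := by positivity
  obtain ⟨y', hy', hσy'⟩ := mem_nhdsGT_iff_exists_Ioc_subset.1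
    (hσ1.eventually (Ioi_mem_nhds (show 1 - a * ε / 2 < 1 by linarith)))
  have hρ : 1 - σ y₀ * η < 1 := by nlinarith [hη.1]
  obtain ⟨m, hm⟩ := exists_pow_lt_of_lt_one (div_pos (mul_pos (mem_Ioi.1 hy') (exp_pos (-B)))
    hy₀.1) hρ
  refine ⟨m, fun x hx hgap hS ↦ ?_⟩
  have hY := hσ.mixOrbit_mem_Ioc ha hx hy₀
  have hYm : mixOrbit σ y₀ x m ≤ y' * exp (-B) :=
    (mixOrbit_le_mul_pow hσ ha hx hy₀ hanti (Ioc_subset_Icc_self hη) hgap m le_rfl).trans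
      (by rw [lt_div_iff₀ hy₀.1] at hm; linarith)
  have htail : Tendsto (fun n ↦ mixOrbit σ y₀ x (m + n)) atTop (𝓝 0) := by
    refine tendsto_zero_of_le_mul_exp hε (fun n ↦ (hY _).1) (fun n hn ↦ ?_) hS hYm
    have hpos : 0 < x (m + n) := ha.trans_le (hx _).1
    have h1σ : 1 - σ (mixOrbit σ y₀ x (m + n)) ≤ a * ε / 2 := by
      have : 1 - a * ε / 2 < σ (mixOrbit σ y₀ x (m + n)) := hσy' ⟨(hY _).1, hn⟩
      linarith
    calc mixOrbit σ y₀ x (m + n + 1)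
        ≤ mixOrbit σ y₀ x (m + n) * (x (m + n) * exp (a * ε / 2 / a)) :=
          mul_le_mul_of_nonneg_left (one_sub_add_mul_le_mul_exp ha (hx _).1
            (hσ.mem_Icc _ (hY _)).2 h1σ) (hY _).1.le
      _ = mixOrbit σ y₀ x (m + n) * exp (log (x (m + n)) + ε / 2) := by
          rw [exp_add, exp_log hpos]; field_simp
  rw [← tendsto_add_atTop_iff_nat m]
  simpa only [add_comm] using htail

section IID

variable {Ω : Type*} [MeasurableSpace Ω] {P : Measure Ω}

lemma integrable_log_of_ae_mem_Icc [IsFiniteMeasure P] {a b : ℝ} {V : Ω → ℝ} (hV : Measurable V)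
    (ha : 0 < a) (hVab : ∀ᵐ ω ∂P, V ω ∈ Icc a b) : Integrable (fun ω ↦ log (V ω)) P :=
  .of_bound (measurable_log.comp hV).aestronglyMeasurable _
    (hVab.mono fun _ hω ↦ abs_log_le_max_of_mem_Icc ha hω)

lemma exists_pos_measure_le_one_sub {V : Ω → ℝ} (hV : ∫ ω, log (V ω) ∂P < 0) :
    ∃ η ∈ Ioc (0 : ℝ) 1, 0 < P {ω | V ω ≤ 1 - η} := by
  by_contra! h
  have hnull : ∀ᵐ ω ∂P, ∀ k : ℕ, ¬ V ω ≤ 1 - 1 / (k + 1) := ae_all_iff.2 fun k ↦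
    measure_eq_zero_iff_ae_notMem.1 <| nonpos_iff_eq_zero.1 <| h _
      ⟨Nat.one_div_pos_of_nat, div_le_one_of_le₀ (by simp) (by positivity)⟩
  have hlog : ∀ᵐ ω ∂P, 0 ≤ log (V ω) := hnull.mono fun ω hω ↦ log_nonneg <| by
    by_contra! hlt
    obtain ⟨k, hk⟩ := exists_nat_one_div_lt (sub_pos.2 hlt)
    exact hω k (by linarith)
  exact hV.not_ge (integral_nonneg_of_ae hlog)

lemma ae_tendsto_sum_add_mul_atBot {U : ℕ → Ω → ℝ} (hint : Integrable (U 0) P)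
    (hindep : Pairwise (Function.onFun (· ⟂ᵢ[P] ·) U))
    (hident : ∀ i, IdentDistrib (U i) (U 0) P P) {ε : ℝ} (hε : P[U 0] + ε < 0) :
    ∀ᵐ ω ∂P, Tendsto (fun n : ℕ ↦ ∑ k ∈ range n, U k ω + ε * n) atTop atBot := by
  filter_upwards [strong_law_ae U hint hindep hident] with ω hω
  have hmean : Tendsto (fun n : ℕ ↦ (n : ℝ)⁻¹ * ∑ k ∈ range n, U k ω + ε) atTop
      (𝓝 (P[U 0] + ε)) := by
    simpa only [smul_eq_mul] using hω.add_const ε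
  refine (tendsto_natCast_atTop_atTop.atTop_mul_neg hε hmean).congr' ?_
  filter_upwards [eventually_ne_atTop 0] with n hn
  field_simp

lemma exists_pos_measure_forall_le [NeZero P] {f : ℕ → Ω → ℝ}
    (hf : ∀ᵐ ω ∂P, Tendsto (f · ω) atTop atBot) : ∃ B : ℝ, 0 < P {ω | ∀ n, f n ω ≤ B} := by
  by_contra! h
  have hnull : ∀ᵐ ω ∂P, ∀ B : ℕ, ¬ ∀ n, f n ω ≤ B := ae_all_iff.2 fun B ↦
    measure_eq_zero_iff_ae_notMem.1 <| nonpos_iff_eq_zero.1 <| h B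
  obtain ⟨ω, hω, hB⟩ := (hf.and hnull).exists
  obtain ⟨B, hB'⟩ := bddAbove_range_of_tendsto_atTop_atBot hω
  obtain ⟨N, hN⟩ := exists_nat_ge B
  exact hB N fun n ↦ (hB' ⟨n, rfl⟩).trans hN

lemma identDistrib_shift {X : ℕ → Ω → ℝ} (hXi : iIndepFun X P)
    (hXid : ∀ n, IdentDistrib (X n) (X 0) P P) (m : ℕ) :
    IdentDistrib (fun ω k ↦ X (m + k) ω) (fun ω k ↦ X k ω) P P :=
  .pi (fun k ↦ (hXid (m + k)).trans (hXid k).symm) (hXi.precomp (add_right_injective m)) hXi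

lemma measure_biInter_range_preimage {X : ℕ → Ω → ℝ} (hXi : iIndepFun X P)
    (hXid : ∀ n, IdentDistrib (X n) (X 0) P P) {T : Set ℝ} (hT : MeasurableSet T) (m : ℕ) :
    P (⋂ k ∈ range m, X k ⁻¹' T) = P (X 0 ⁻¹' T) ^ m := by
  rw [hXi.meas_biInter fun k _ ↦ ⟨T, hT, rfl⟩, Finset.prod_congr rfl fun k _ ↦
    (hXid k).measure_mem_eq hT, prod_const, card_range]

lemma measure_biInter_range_preimage_inter_shift {X : ℕ → Ω → ℝ} (hXm : ∀ n, Measurable (X n))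
    (hXi : iIndepFun X P) {T : Set ℝ} (hT : MeasurableSet T) {S : Set (ℕ → ℝ)}
    (hS : MeasurableSet S) (m : ℕ) :
    P ((⋂ k ∈ range m, X k ⁻¹' T) ∩ (fun ω k ↦ X (m + k) ω) ⁻¹' S) =
      P (⋂ k ∈ range m, X k ⁻¹' T) * P ((fun ω k ↦ X (m + k) ω) ⁻¹' S) := by
  let mX : ℕ → MeasurableSpace Ω := fun k ↦ MeasurableSpace.comap (X k) inferInstance
  have hind : Indep (⨆ k ∈ {k | k < m}, mX k) (⨆ k ∈ {k | m ≤ k}, mX k) P :=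
    indep_iSup_of_disjoint (fun k ↦ (hXm k).comap_le) hXi.iIndep
      (disjoint_left.2 fun _ (h1 : _ < m) h2 ↦ not_le.2 h1 h2)
  have hprefix : MeasurableSet[⨆ k ∈ {k | k < m}, mX k] (⋂ k ∈ range m, X k ⁻¹' T) :=
    .biInter (to_countable _) fun k hk ↦
      le_iSup₂ (f := fun k (_ : k ∈ {k | k < m}) ↦ mX k) k (mem_range.1 hk) _ ⟨T, hT, rfl⟩
  have hshift : Measurable[⨆ k ∈ {k | m ≤ k}, mX k] fun ω k ↦ X (m + k) ω :=
    @measurable_pi_lambda _ _ _ (⨆ k ∈ {k | m ≤ k}, mX k) _ _ fun k ↦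
      Measurable.of_comap_le <|
        le_iSup₂ (f := fun k (_ : k ∈ {k | m ≤ k}) ↦ mX k) (m + k) (Nat.le_add_right m k)
  exact (Indep_iff _ _ _).1 hind _ _ hprefix (hshift hS)

lemma condExp_comp_natural_ae_eq [IsProbabilityMeasure P] {X : ℕ → Ω → ℝ}
    (hXm : ∀ n, Measurable (X n)) (hXi : iIndepFun X P) (hXid : ∀ n, IdentDistrib (X n) (X 0) P P)
    {f : ℝ → ℝ} (hf : Measurable f) (n : ℕ) :
    P[fun ω ↦ f (X (n + 1) ω) | Filtration.natural X (fun k ↦ (hXm k).stronglyMeasurable) n]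
      =ᵐ[P] fun _ ↦ ∫ ω, f (X 0 ω) ∂P := by
  have hindep : Indep ((inferInstance : MeasurableSpace ℝ).comap fun ω ↦ f (X (n + 1) ω))
      (Filtration.natural X (fun k ↦ (hXm k).stronglyMeasurable) n) P := by
    refine indep_of_indep_of_le_left (hXi.indep_comap_natural_of_lt _ n.lt_succ_self) ?_
    rw [← Function.comp_def, ← MeasurableSpace.comap_comp]
    exact MeasurableSpace.comap_mono hf.comap_le
  refine (condExp_indep_eq (hf.comp (hXm _)).comap_le (Filtration.le _ n)
    (comap_measurable _).stronglyMeasurable hindep).trans (ae_of_all _ fun _ ↦ ?_)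
  exact ((hXid (n + 1)).comp hf).integral_eq

end IID

section RandomOrbit

variable {Ω : Type*} [MeasurableSpace Ω] {P : Measure Ω} {X : ℕ → Ω → ℝ}
  {σ : ℝ → ℝ} {a b c y₀ : ℝ}

theorem measure_tendsto_mixOrbit_zero_pos [IsProbabilityMeasure P] (hXm : ∀ n, Measurable (X n))
    (hXi : iIndepFun X P) (hXid : ∀ n, IdentDistrib (X n) (X 0) P P)
    (hXab : ∀ n ω, X n ω ∈ Icc a b) (ha : 0 < a) (hσ : IsMixWeight σ a b c)
    (hanti : AntitoneOn σ (Ioc 0 c)) (hσ1 : Tendsto σ (𝓝[>] 0) (𝓝 1)) (hy₀ : y₀ ∈ Ioc 0 c)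
    (hσy₀ : 0 < σ y₀) (hlog : ∫ ω, log (X 0 ω) ∂P < 0) :
    0 < P {ω | Tendsto (fun n ↦ mixOrbit σ y₀ (X · ω) n) atTop (𝓝 0)} := by
  obtain ⟨η, hη, hgap⟩ := exists_pos_measure_le_one_sub hlog
  set ε := -(∫ ω, log (X 0 ω) ∂P) / 2
  have hε : 0 < ε := by simp only [ε]; linarith
  obtain ⟨B, hB⟩ := exists_pos_measure_forall_le <|
    ae_tendsto_sum_add_mul_atBot (U := fun n ω ↦ log (X n ω))
      (integrable_log_of_ae_mem_Icc (hXm 0) ha (ae_of_all _ (hXab 0)))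
      (fun i j hij ↦ (hXi.indepFun hij).comp measurable_log measurable_log)
      (fun i ↦ (hXid i).comp measurable_log) (ε := ε) (by simp only [ε]; linarith)
  obtain ⟨m, hm⟩ := exists_tendsto_mixOrbit_zero hσ ha hy₀ hanti hσ1 hσy₀ hη hε B
  set S : Set (ℕ → ℝ) := {v | ∀ n, ∑ k ∈ range n, log (v k) + ε * n ≤ B}
  have hS : MeasurableSet S := by
    simp only [S, ofPred_forall]
    exact .iInter fun n ↦ measurableSet_le (by fun_prop) measurable_const
  have hsub : (⋂ k ∈ range m, X k ⁻¹' Iic (1 - η)) ∩ (fun ω k ↦ X (m + k) ω) ⁻¹' S ⊆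
      {ω | Tendsto (fun n ↦ mixOrbit σ y₀ (X · ω) n) atTop (𝓝 0)} :=
    fun ω ⟨hA, hG⟩ ↦ hm _ (hXab · ω) (fun k hk ↦ mem_iInter₂.1 hA k (mem_range.2 hk)) hG
  refine lt_of_lt_of_le ?_ (measure_mono hsub)
  rw [measure_biInter_range_preimage_inter_shift hXm hXi measurableSet_Iic hS,
    measure_biInter_range_preimage hXi hXid measurableSet_Iic,
    (identDistrib_shift hXi hXid m).measure_mem_eq hS]
  exact ENNReal.mul_pos (ENNReal.pow_pos hgap m).ne' hB.ne'

/-- The index is shifted by one so that the process is adapted to the natural filtration of `X`. -/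
theorem submartingale_log_mixOrbit [IsProbabilityMeasure P] (hXm : ∀ n, Measurable (X n))
    (hXi : iIndepFun X P) (hXid : ∀ n, IdentDistrib (X n) (X 0) P P)
    (hXab : ∀ n ω, X n ω ∈ Icc a b) (ha : 0 < a) (hσ : IsMixWeight σ a b c)
    (hσm : Measurable σ) (hy₀ : y₀ ∈ Ioc 0 c) (hlog : 0 ≤ ∫ ω, log (X 0 ω) ∂P) :
    Submartingale (fun n ω ↦ log (mixOrbit σ y₀ (X · ω) (n + 1)))
      (Filtration.natural X fun n ↦ (hXm n).stronglyMeasurable) P := by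
  set ℱ := Filtration.natural X fun n ↦ (hXm n).stronglyMeasurable
  set Y : ℕ → Ω → ℝ := fun n ω ↦ mixOrbit σ y₀ (X · ω) n
  have hY : ∀ n ω, Y n ω ∈ Ioc 0 c := fun n ω ↦ hσ.mixOrbit_mem_Ioc ha (hXab · ω) hy₀ n
  have hYℱ : ∀ n, Measurable[ℱ n] (Y (n + 1)) := fun n ↦ measurable_mixOrbit hσm fun k hk ↦
    ((Filtration.stronglyAdapted_natural _ k).measurable).mono (ℱ.mono (Nat.lt_succ_iff.1 hk))
      le_rfl
  have hYm : ∀ n, Measurable (Y n) := fun n ↦ measurable_mixOrbit hσm fun k _ ↦ hXm k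
  have hint : ∀ n, Integrable (fun ω ↦ log (Y (n + 1) ω)) P := fun n ↦
    .of_bound (measurable_log.comp (hYm _)).aestronglyMeasurable _ <| ae_of_all _ fun ω ↦
      hσ.abs_log_mixOrbit_le ha (hXab · ω) hy₀ (n + 1)
  have hlogX : ∀ n, Integrable (fun ω ↦ log (X n ω)) P := fun n ↦
    integrable_log_of_ae_mem_Icc (hXm n) ha (ae_of_all _ (hXab n))
  refine submartingale_of_condExp_sub_nonneg_nat
    (fun n ↦ (measurable_log.comp (hYℱ n)).stronglyMeasurable) hint fun n ↦ ?_
  set W : Ω → ℝ := fun ω ↦ σ (Y (n + 1) ω) * log (X (n + 1) ω)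
  have hW : Integrable W P := .of_bound
    ((hσm.comp (hYm _)).mul (measurable_log.comp (hXm _))).aestronglyMeasurable
    (max |log a| |log b|) <| ae_of_all _ fun ω ↦ by
      have hσY := hσ.mem_Icc _ (hY (n + 1) ω)
      rw [Real.norm_eq_abs, abs_mul, abs_of_nonneg hσY.1]
      exact (mul_le_of_le_one_left (abs_nonneg _) hσY.2).trans
        (abs_log_le_max_of_mem_Icc ha (hXab _ ω))
  have hW_le : W ≤ᵐ[P] fun ω ↦ log (Y (n + 1 + 1) ω) - log (Y (n + 1) ω) := ae_of_all _ fun ω ↦ by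
    simp only [W, Y, hσ.log_mixOrbit_succ ha (hXab · ω) hy₀ (n + 1), add_sub_cancel_left]
    exact mul_log_le_log_one_sub_add_mul (hσ.mem_Icc _ (hY _ ω)) (ha.trans_le (hXab _ ω).1)
  have hcond := condExp_comp_natural_ae_eq hXm hXi hXid measurable_log n
  have hpull : P[W | ℱ n] =ᵐ[P] (fun ω ↦ σ (Y (n + 1) ω)) *
      P[fun ω ↦ log (X (n + 1) ω) | ℱ n] :=
    condExp_mul_of_stronglyMeasurable_left (hσm.comp (hYℱ n)).stronglyMeasurable hW (hlogX _)
  filter_upwards [condExp_mono hW ((hint _).sub (hint _)) hW_le, hpull, hcond] with ω h1 h2 h3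
  refine le_trans ?_ h1
  rw [h2, Pi.mul_apply, h3]
  exact mul_nonneg (hσ.mem_Icc _ (hY _ ω)).1 hlog

theorem measure_tendsto_mixOrbit_zero_eq_zero [IsProbabilityMeasure P]
    (hXm : ∀ n, Measurable (X n)) (hXi : iIndepFun X P) (hXid : ∀ n, IdentDistrib (X n) (X 0) P P)
    (hXab : ∀ n ω, X n ω ∈ Icc a b) (ha : 0 < a) (hσ : IsMixWeight σ a b c)
    (hσm : Measurable σ) (hy₀ : y₀ ∈ Ioc 0 c) (hlog : 0 ≤ ∫ ω, log (X 0 ω) ∂P) :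
    P {ω | Tendsto (fun n ↦ mixOrbit σ y₀ (X · ω) n) atTop (𝓝 0)} = 0 := by
  have hbdd := (submartingale_log_mixOrbit hXm hXi hXid hXab ha hσ hσm hy₀ hlog)
    |>.bddAbove_iff_exists_tendsto (R := (max |log a| |log b|).toNNReal) <| ae_of_all _ fun ω n ↦
      (hσ.abs_log_mixOrbit_succ_sub_le ha (hXab · ω) hy₀ (n + 1)).trans (le_coe_toNNReal _)
  rw [measure_eq_zero_iff_ae_notMem]
  filter_upwards [hbdd] with ω hω hY
  have hY' := fun n ↦ hσ.mixOrbit_mem_Ioc ha (hXab · ω) hy₀ (n + 1)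
  have hbot : Tendsto (fun n ↦ log (mixOrbit σ y₀ (X · ω) (n + 1))) atTop atBot :=
    tendsto_log_nhdsGT_zero.comp <| tendsto_nhdsWithin_iff.2
      ⟨(tendsto_add_atTop_iff_nat 1).2 hY, .of_forall fun n ↦ (hY' n).1⟩
  obtain ⟨l, hl⟩ := hω.1 ⟨log c, by rintro _ ⟨n, rfl⟩; exact log_le_log (hY' n).1 (hY' n).2⟩
  exact not_tendsto_nhds_of_tendsto_atBot hbot l hl

theorem measure_tendsto_mixOrbit_zero_pos_iff [IsProbabilityMeasure P]
    (hXm : ∀ n, Measurable (X n)) (hXi : iIndepFun X P) (hXid : ∀ n, IdentDistrib (X n) (X 0) P P)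
    (hXab : ∀ n ω, X n ω ∈ Icc a b) (ha : 0 < a) (hσ : IsMixWeight σ a b c)
    (hσm : Measurable σ) (hanti : AntitoneOn σ (Ioc 0 c)) (hσ1 : Tendsto σ (𝓝[>] 0) (𝓝 1))
    (hy₀ : y₀ ∈ Ioc 0 c) (hσy₀ : 0 < σ y₀) :
    0 < P {ω | Tendsto (fun n ↦ mixOrbit σ y₀ (X · ω) n) atTop (𝓝 0)} ↔
      ∫ ω, log (X 0 ω) ∂P < 0 :=
  ⟨fun h ↦ not_le.1 fun hlog ↦ h.ne'
    (measure_tendsto_mixOrbit_zero_eq_zero hXm hXi hXid hXab ha hσ hσm hy₀ hlog),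
    measure_tendsto_mixOrbit_zero_pos hXm hXi hXid hXab ha hσ hanti hσ1 hy₀ hσy₀⟩

end RandomOrbit

section DrivenByLaw

lemma lintegral_ofReal_lt_lintegral_ofReal_neg_iff {α : Type*} [MeasurableSpace α]
    {μ : Measure α} {f : α → ℝ} (hf : Integrable f μ) :
    ∫⁻ a, ENNReal.ofReal (f a) ∂μ < ∫⁻ a, ENNReal.ofReal (-f a) ∂μ ↔ ∫ a, f a ∂μ < 0 := by
  rw [integral_eq_lintegral_pos_part_sub_lintegral_neg_part hf, sub_neg]
  exact (ENNReal.toReal_lt_toReal hf.lintegral_lt_top.ne hf.neg.lintegral_lt_top.ne).symm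

lemma expLogNeg_iff_integral_log_neg {μ : Measure ℝ} [IsFiniteMeasure μ] {g : ℝ → ℝ} {a b : ℝ}
    (hg : Measurable g) (ha : 0 < a) (hgab : ∀ᵐ θ ∂μ, g θ ∈ Icc a b) :
    expLogNeg μ g ↔ ∫ θ, log (g θ) ∂μ < 0 := by
  have hneg : ∫⁻ θ, logNeg (g θ) ∂μ = ∫⁻ θ, ENNReal.ofReal (-log (g θ)) ∂μ :=
    lintegral_congr_ae <| hgab.mono fun θ hθ ↦ by simp [logNeg, (ha.trans_le hθ.1).not_ge]
  rw [expLogNeg, hneg]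
  exact lintegral_ofReal_lt_lintegral_ofReal_neg_iff (integrable_log_of_ae_mem_Icc hg ha hgab)

/-- The parameters `Θ n` lie in `[0, 1]` only almost surely; clamping them to `[0, 1]` changes
nothing almost surely and makes the noise `g (Θ n)` take values in `[a, b]` everywhere. -/
theorem measure_tendsto_mixOrbit_comp_zero_pos_iff {μ : Measure ℝ} [IsProbabilityMeasure μ]
    (hμ1 : μ (Icc 0 1) = 1) {Ω : Type*} [MeasurableSpace Ω] {P : Measure Ω}
    [IsProbabilityMeasure P] {Θ : ℕ → Ω → ℝ} (hmeas : ∀ n, Measurable (Θ n))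
    (hindep : iIndepFun Θ P) (hlaw : ∀ n, Measure.map (Θ n) P = μ) {g σ : ℝ → ℝ}
    {a b c y₀ : ℝ} (hg : Measurable g) (hgab : MapsTo g (Icc 0 1) (Icc a b)) (ha : 0 < a)
    (hσ : IsMixWeight σ a b c) (hσm : Measurable σ) (hanti : AntitoneOn σ (Ioc 0 c))
    (hσ1 : Tendsto σ (𝓝[>] 0) (𝓝 1)) (hy₀ : y₀ ∈ Ioc 0 c) (hσy₀ : 0 < σ y₀) :
    0 < P {ω | Tendsto (fun n ↦ mixOrbit σ y₀ (fun k ↦ g (Θ k ω)) n) atTop (𝓝 0)} ↔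
      expLogNeg μ g := by
  set clamp : ℝ → ℝ := fun θ ↦ projIcc 0 1 zero_le_one θ
  have hclamp : Measurable clamp := (continuous_subtype_val.comp continuous_projIcc).measurable
  have hclamp_eq : ∀ θ ∈ Icc (0 : ℝ) 1, clamp θ = θ := fun θ hθ ↦
    congrArg Subtype.val (projIcc_of_mem zero_le_one hθ)
  have hμIcc : ∀ᵐ θ ∂μ, θ ∈ Icc (0 : ℝ) 1 :=
    (ae_iff_measure_eq measurableSet_Icc.nullMeasurableSet).2 (hμ1.trans measure_univ.symm)
  have hΘIcc : ∀ᵐ ω ∂P, ∀ n, Θ n ω ∈ Icc (0 : ℝ) 1 :=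
    ae_all_iff.2 fun n ↦ ae_of_ae_map (hmeas n).aemeasurable (by rwa [hlaw n])
  set X : ℕ → Ω → ℝ := fun n ω ↦ g (clamp (Θ n ω))
  have hevent : {ω | Tendsto (fun n ↦ mixOrbit σ y₀ (fun k ↦ g (Θ k ω)) n) atTop (𝓝 0)} =ᵐ[P]
      {ω | Tendsto (fun n ↦ mixOrbit σ y₀ (X · ω) n) atTop (𝓝 0)} :=
    eventuallyEq_set.2 <| hΘIcc.mono fun ω hω ↦ by
      have : (fun k ↦ g (Θ k ω)) = (X · ω) := funext fun k ↦ congrArg g (hclamp_eq _ (hω k)).symm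
      show Tendsto _ _ _ ↔ Tendsto _ _ _
      rw [this]
  have hmean : ∫ ω, log (X 0 ω) ∂P = ∫ θ, log (g θ) ∂μ := by
    rw [← integral_map (f := fun θ ↦ log (g (clamp θ))) (hmeas 0).aemeasurable
      (measurable_log.comp (hg.comp hclamp)).aestronglyMeasurable, hlaw 0]
    exact integral_congr_ae <| hμIcc.mono fun θ hθ ↦ by simp only [hclamp_eq θ hθ]
  rw [measure_congr hevent, expLogNeg_iff_integral_log_neg hg ha (hμIcc.mono fun θ ↦ @hgab θ),
    ← hmean]
  refine measure_tendsto_mixOrbit_zero_pos_iff (fun n ↦ (hg.comp hclamp).comp (hmeas n))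
    (hindep.comp _ fun _ ↦ hg.comp hclamp) (fun n ↦ ?_)
    (fun n ω ↦ hgab (projIcc 0 1 zero_le_one (Θ n ω)).2) ha hσ hσm hanti hσ1 hy₀ hσy₀
  exact (show IdentDistrib (Θ n) (Θ 0) P P from
    ⟨(hmeas n).aemeasurable, (hmeas 0).aemeasurable, by rw [hlaw, hlaw]⟩).comp (hg.comp hclamp)

end DrivenByLaw

section EdgeM12

def edgePoint (z : ℝ) : EuclideanSpace ℝ (Fin 3) := !₂[(1 - z) / 2, (1 - z) / 2, z]

def σc (z : ℝ) : ℝ := (1 - 3 * z) * (1 - z)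

def σC (w : ℝ) : ℝ := 9 / 2 * ((1 / 3 - w) * (2 / 3 + w))

lemma Vcso_edgePoint (θ z : ℝ) :
    Vcso θ (edgePoint z) = edgePoint (mixStep σc (2 - 3 / 2 * θ) z) := by
  ext i
  fin_cases i <;>
    simp only [Vcso, edgePoint, Fin.isValue, Fin.zero_eta, Fin.mk_one, Fin.reduceFinMk,
      Matrix.cons_val_zero, Matrix.cons_val_one, Matrix.cons_val] <;>
    unfold mixStep σc <;> ring

lemma phiRDS_edgePoint (θs : ℕ → ℝ) (z : ℝ) (n : ℕ) :
    phiRDS θs n (edgePoint z) = edgePoint (mixOrbit σc z (fun k ↦ 2 - 3 / 2 * θs k) n) := by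
  induction n with
  | zero => rfl
  | succ n ih => rw [phiRDS, ih, Vcso_edgePoint]; rfl

lemma one_third_sub_mixOrbit_σc (θs : ℕ → ℝ) (z : ℝ) (n : ℕ) :
    1 / 3 - mixOrbit σc z (fun k ↦ 2 - 3 / 2 * θs k) n =
      mixOrbit σC (1 / 3 - z) (fun k ↦ 1 / 3 + θs k) n := by
  induction n with
  | zero => rfl
  | succ n ih => simp only [mixOrbit, ← ih, mixStep, σc, σC]; ring

lemma tendsto_edgePoint_iff {u : ℕ → ℝ} {l : ℝ} :
    Tendsto (fun n ↦ edgePoint (u n)) atTop (𝓝 (edgePoint l)) ↔ Tendsto u atTop (𝓝 l) := by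
  refine ⟨fun h ↦ ((PiLp.continuous_apply 2 _ 2).tendsto _).comp h, fun h ↦ ?_⟩
  have : Continuous edgePoint := by
    refine (PiLp.continuous_toLp 2 _).comp (continuous_pi fun i ↦ ?_)
    fin_cases i <;>
      simp only [Nat.succ_eq_add_one, Nat.reduceAdd, Fin.isValue, Fin.zero_eta, Fin.mk_one,
        Fin.reduceFinMk, Matrix.cons_val_zero, Matrix.cons_val_one, Matrix.cons_val] <;>
      fun_prop
  exact (this.tendsto l).comp h

lemma exists_eq_edgePoint {x : EuclideanSpace ℝ (Fin 3)} (hx : x ∈ M12) (hxC : x ≠ Cpt)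
    (hxc : x ≠ cpt) : ∃ z ∈ Ioo (0 : ℝ) (1 / 3), x = edgePoint z := by
  obtain ⟨⟨-, -, h2, hsum⟩, h01, h12⟩ := hx
  have hx : x = edgePoint (x 2) := by
    ext i
    fin_cases i <;>
      simp only [edgePoint, Fin.isValue, Fin.zero_eta, Fin.mk_one, Fin.reduceFinMk,
        Matrix.cons_val_zero, Matrix.cons_val_one, Matrix.cons_val] <;> linarith
  refine ⟨x 2, ⟨h2.lt_of_ne fun h ↦ hxc ?_,
    (show x 2 ≤ 1 / 3 by linarith).lt_of_ne fun h ↦ hxC ?_⟩, hx⟩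
  · rw [hx, ← h]; ext i; fin_cases i <;> simp [edgePoint, cpt]
  · rw [hx, h]; ext i; fin_cases i <;> norm_num [edgePoint, Cpt]

lemma tendsto_phiRDS_edgePoint_cpt_iff (θs : ℕ → ℝ) (z : ℝ) :
    Tendsto (fun n ↦ phiRDS θs n (edgePoint z)) atTop (𝓝 cpt) ↔
      Tendsto (fun n ↦ mixOrbit σc z (fun k ↦ 2 - 3 / 2 * θs k) n) atTop (𝓝 0) := by
  have : cpt = edgePoint 0 := by ext i; fin_cases i <;> simp [edgePoint, cpt]
  simp only [phiRDS_edgePoint, this, tendsto_edgePoint_iff]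

lemma tendsto_phiRDS_edgePoint_Cpt_iff (θs : ℕ → ℝ) (z : ℝ) :
    Tendsto (fun n ↦ phiRDS θs n (edgePoint z)) atTop (𝓝 Cpt) ↔
      Tendsto (fun n ↦ mixOrbit σC (1 / 3 - z) (fun k ↦ 1 / 3 + θs k) n) atTop (𝓝 0) := by
  have : Cpt = edgePoint (1 / 3) := by ext i; fin_cases i <;> norm_num [edgePoint, Cpt]
  rw [this, ← tendsto_const_sub_iff (1 / 3 : ℝ), sub_zero]
  simp only [phiRDS_edgePoint, tendsto_edgePoint_iff, ← one_third_sub_mixOrbit_σc, sub_sub_cancel]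

end EdgeM12

section Weights

lemma isMixWeight_σc : IsMixWeight σc (1 / 2) 2 (1 / 3) where
  mem_Icc y hy := by
    unfold σc; constructor <;> nlinarith [hy.1, hy.2]
  mixStep_le x hx y hy := by
    have hs : 0 ≤ σc y := by unfold σc; nlinarith [hy.1, hy.2]
    have hc : 1 / 3 - y * (1 + σc y) = (1 - 3 * y) * (1 / 3 - y + y ^ 2) := by unfold σc; ring
    have : 0 ≤ (1 - 3 * y) * (1 / 3 - y + y ^ 2) :=
      mul_nonneg (by linarith [hy.2]) (by nlinarith [sq_nonneg (y - 1 / 2)])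
    unfold mixStep
    nlinarith [mul_nonneg (mul_nonneg hy.1.le hs) (by linarith [hx.2] : (0 : ℝ) ≤ 2 - x)]

lemma isMixWeight_σC : IsMixWeight σC (1 / 3) (4 / 3) (1 / 3) where
  mem_Icc y hy := by
    unfold σC; constructor <;> nlinarith [hy.1, hy.2]
  mixStep_le x hx y hy := by
    have hs : 0 ≤ σC y := by unfold σC; nlinarith [hy.1, hy.2]
    have hc : 1 / 3 - y * (1 + σC y / 3) = (1 - 3 * y) * (1 / 3 - y / 3 - y ^ 2 / 2) := by
      unfold σC; ring
    have : 0 ≤ (1 - 3 * y) * (1 / 3 - y / 3 - y ^ 2 / 2) :=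
      mul_nonneg (by linarith [hy.2]) (by nlinarith [hy.1, hy.2])
    unfold mixStep
    nlinarith [mul_nonneg (mul_nonneg hy.1.le hs) (by linarith [hx.2] : (0 : ℝ) ≤ 4 / 3 - x)]

lemma antitoneOn_σc : AntitoneOn σc (Ioc 0 (1 / 3)) := fun y hy y' hy' hyy' ↦ by
  unfold σc
  nlinarith [mul_nonneg (sub_nonneg.2 hyy')
    (by linarith [hy.2, hy'.2] : (0 : ℝ) ≤ 4 - 3 * (y + y'))]

lemma antitoneOn_σC : AntitoneOn σC (Ioc 0 (1 / 3)) := fun y hy y' hy' hyy' ↦ by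
  unfold σC
  nlinarith [mul_nonneg (sub_nonneg.2 hyy') (by linarith [hy.1, hy'.1] : (0 : ℝ) ≤ 1 / 3 + y + y')]

lemma continuous_σc : Continuous σc := by unfold σc; fun_prop

lemma continuous_σC : Continuous σC := by unfold σC; fun_prop

lemma tendsto_σc : Tendsto σc (𝓝[>] 0) (𝓝 1) := by
  have := (continuous_σc.tendsto 0).mono_left (nhdsWithin_le_nhds (s := Ioi 0))
  rwa [show σc 0 = 1 by norm_num [σc]] at this

lemma tendsto_σC : Tendsto σC (𝓝[>] 0) (𝓝 1) := by
  have := (continuous_σC.tendsto 0).mono_left (nhdsWithin_le_nhds (s := Ioi 0))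
  rwa [show σC 0 = 1 by norm_num [σC]] at this

lemma σc_pos {y : ℝ} (hy : y < 1 / 3) : 0 < σc y := mul_pos (by linarith) (by linarith)

lemma σC_pos {y : ℝ} (hy : y ∈ Ioo (0 : ℝ) (1 / 3)) : 0 < σC y :=
  mul_pos (by norm_num) (mul_pos (by linarith [hy.2]) (by linarith [hy.1]))

end Weights

theorem attractor_on_M12_general (μ : Measure ℝ) [IsProbabilityMeasure μ] (hμ1 : μ (Set.Icc 0 1) = 1)
    {Ω : Type*} [MeasurableSpace Ω] (P : Measure Ω) [IsProbabilityMeasure P]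
    (Θ : ℕ → Ω → ℝ) (hmeas : ∀ n, Measurable (Θ n))
    (hindep : iIndepFun Θ P)
    (hlaw : ∀ n, Measure.map (Θ n) P = μ)
    (x : EuclideanSpace ℝ (Fin 3)) (hx : x ∈ M12) (hxC : x ≠ Cpt) (hxc : x ≠ cpt) :
    (0 < P {ω | Tendsto (fun n => phiRDS (fun k => Θ k ω) n x) atTop (𝓝 Cpt)} ↔
      expLogNeg μ (fun θ => 1/3 + θ)) ∧
    (0 < P {ω | Tendsto (fun n => phiRDS (fun k => Θ k ω) n x) atTop (𝓝 cpt)} ↔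
      expLogNeg μ (fun θ => 2 - 3/2 * θ)) := by
  obtain ⟨z, hz, rfl⟩ := exists_eq_edgePoint hx hxC hxc
  simp only [tendsto_phiRDS_edgePoint_Cpt_iff, tendsto_phiRDS_edgePoint_cpt_iff]
  have hw : 1 / 3 - z ∈ Ioo (0 : ℝ) (1 / 3) := ⟨by linarith [hz.2], by linarith [hz.1]⟩
  constructor
  · exact measure_tendsto_mixOrbit_comp_zero_pos_iff (g := fun θ ↦ 1 / 3 + θ) hμ1 hmeas hindep
      hlaw (by fun_prop) (fun θ hθ ↦ ⟨by linarith [hθ.1], by linarith [hθ.2]⟩) (by norm_num)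
      isMixWeight_σC continuous_σC.measurable antitoneOn_σC tendsto_σC (Ioo_subset_Ioc_self hw)
      (σC_pos hw)
  · exact measure_tendsto_mixOrbit_comp_zero_pos_iff (g := fun θ ↦ 2 - 3 / 2 * θ) hμ1 hmeas hindep
      hlaw (by fun_prop) (fun θ hθ ↦ ⟨by linarith [hθ.2], by linarith [hθ.1]⟩) (by norm_num)
      isMixWeight_σc continuous_σc.measurable antitoneOn_σc tendsto_σc (Ioo_subset_Ioc_self hz)
      (σc_pos hz.2)

/-- Theorem 2.2 b). -/
theorem attractor_on_M12 (μ : Measure ℝ) [IsProbabilityMeasure μ] (hμ1 : μ (Set.Icc 0 1) = 1)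
    (hμ : μ ≠ Measure.dirac (2/3 : ℝ))
    {Ω : Type*} [MeasurableSpace Ω] (P : Measure Ω) [IsProbabilityMeasure P]
    (Θ : ℕ → Ω → ℝ) (hmeas : ∀ n, Measurable (Θ n))
    (hindep : iIndepFun Θ P)
    (hlaw : ∀ n, Measure.map (Θ n) P = μ)
    (x : EuclideanSpace ℝ (Fin 3)) (hx : x ∈ M12) (hxC : x ≠ Cpt) (hxc : x ≠ cpt) :
    (0 < P {ω | Tendsto (fun n => phiRDS (fun k => Θ k ω) n x) atTop (𝓝 Cpt)} ↔
      expLogNeg μ (fun θ => 1/3 + θ)) ∧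
    (0 < P {ω | Tendsto (fun n => phiRDS (fun k => Θ k ω) n x) atTop (𝓝 cpt)} ↔
      expLogNeg μ (fun θ => 2 - 3/2 * θ)) :=
  attractor_on_M12_general μ hμ1 P Θ hmeas hindep hlaw x hx hxC hxc
end
end

section
/- Assume the support of μ has nonempty intersection with (2/3, 1]. Then for every ε > 0 and every x ∈ int(G₁) there exists N ∈ ℕ such that P(d(φ_N(x,·), e₁) < ε) > 0, where d is the Euclidean distance on ℝ³. (Lemma 2.3, second part.) -/
open MeasureTheory ProbabilityTheory Filter Topology
open scoped ENNReal

noncomputable section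

/-!
Write `V_θ(x)ᵢ = xᵢ Qᵢ(x)`. On the simplex, `Q₁ - 1 = (3θ - 2)(x₂(x₁ - x₂) + x₃(x₁ - x₃))` and
`Qᵢ - Qⱼ = (3θ - 2)(xᵢ - xⱼ)`. Hence for `θ ∈ [2/3, 1]` the map `V_θ` preserves `G₁`, never
shrinks the gap `x₁ - x₂`, and multiplies `1 - x₁` by at most `1 - (3θ - 2)(x₁ - x₂)/3`.
Since the support of `μ` meets `(2/3, 1]`, some `[θ_L, 1]` with `θ_L > 2/3` has positive
`μ`-mass; on the event that `Θ₁, …, Θ_N ∈ [θ_L, 1]`, of probability `μ[θ_L, 1]^N > 0`, the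
orbit of `x ∈ int(G₁)` is then geometrically close to `e₁`.
-/

-- `Vcso θ x i = x i * vcsoFactor θ (x i) (x (i + 1)) (x (i + 2))`, indices mod 3.
def vcsoFactor (θ a b c : ℝ) : ℝ :=
  a ^ 2 + 3 * θ * a * (b + c) + 3 * (1 - θ) * (b ^ 2 + c ^ 2) + 2 * b * c

section vcsoFactor

variable {θ a b c : ℝ}

lemma vcsoFactor_nonneg (hθ : θ ∈ Set.Icc 0 1) (ha : 0 ≤ a) (hb : 0 ≤ b) (hc : 0 ≤ c) :
    0 ≤ vcsoFactor θ a b c := by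
  obtain ⟨hθ0, hθ1⟩ := hθ
  unfold vcsoFactor
  have : 0 ≤ 1 - θ := by linarith
  positivity

lemma mul_vcsoFactor_cyclic_sum (θ a b c : ℝ) :
    a * vcsoFactor θ a b c + b * vcsoFactor θ b c a + c * vcsoFactor θ c a b = (a + b + c) ^ 3 := by
  unfold vcsoFactor; ring

lemma vcsoFactor_sub_one (h : a + b + c = 1) :
    vcsoFactor θ a b c - 1 = (3 * θ - 2) * (b * (a - b) + c * (a - c)) := by
  rw [← one_pow 2, ← h]; unfold vcsoFactor; ring

lemma mul_vcsoFactor_sub_mul_vcsoFactor (h : a + b + c = 1) :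
    a * vcsoFactor θ a b c - b * vcsoFactor θ b c a
      = (a - b) * (vcsoFactor θ a b c + (3 * θ - 2) * b) := by
  have : (3 * θ - 2) * b = (3 * θ - 2) * b * (a + b + c) := by rw [h, mul_one]
  rw [this]; unfold vcsoFactor; ring

lemma vcsoFactor_add_nonneg (hθ : θ ∈ Set.Icc 0 1) (ha : 0 ≤ a) (hb : 0 ≤ b) (hc : 0 ≤ c)
    (h : a + b + c = 1) : 0 ≤ vcsoFactor θ a b c + (3 * θ - 2) * b := by
  obtain ⟨hθ0, hθ1⟩ := hθ
  have e : vcsoFactor θ a b c + (3 * θ - 2) * b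
      = (1 - θ) * ((a - b) ^ 2 + 3 * c ^ 2) + θ * (a ^ 2 + 4 * a * b + 3 * a * c + b ^ 2 + 3 * b * c) := by
    have : (3 * θ - 2) * b = (3 * θ - 2) * b * (a + b + c) := by rw [h, mul_one]
    rw [this]; unfold vcsoFactor; ring
  rw [e]
  have : 0 ≤ 1 - θ := by linarith
  positivity

end vcsoFactor

section Vcso

variable {θ : ℝ} {x : EuclideanSpace ℝ (Fin 3)}

lemma Vcso_apply_zero : Vcso θ x 0 = x 0 * vcsoFactor θ (x 0) (x 1) (x 2) := rfl

lemma Vcso_apply_one : Vcso θ x 1 = x 1 * vcsoFactor θ (x 1) (x 2) (x 0) := rfl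

lemma Vcso_apply_two : Vcso θ x 2 = x 2 * vcsoFactor θ (x 2) (x 0) (x 1) := rfl

lemma Vcso_mem_simplex2 (hθ : θ ∈ Set.Icc 0 1) (hx : x ∈ simplex2) : Vcso θ x ∈ simplex2 := by
  obtain ⟨h0, h1, h2, hsum⟩ := hx
  refine ⟨?_, ?_, ?_, ?_⟩
  · exact mul_nonneg h0 (vcsoFactor_nonneg hθ h0 h1 h2)
  · exact mul_nonneg h1 (vcsoFactor_nonneg hθ h1 h2 h0)
  · exact mul_nonneg h2 (vcsoFactor_nonneg hθ h2 h0 h1)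
  · rw [Vcso_apply_zero, Vcso_apply_one, Vcso_apply_two, mul_vcsoFactor_cyclic_sum, hsum, one_pow]

lemma Vcso_mem_G1 (hθ : θ ∈ Set.Icc 0 1) (hx : x ∈ G1) : Vcso θ x ∈ G1 := by
  obtain ⟨hs, h01, h12⟩ := hx
  obtain ⟨h0, h1, h2, hsum⟩ := id hs
  refine ⟨Vcso_mem_simplex2 hθ hs, ?_, ?_⟩
  · rw [ge_iff_le, ← sub_nonneg, Vcso_apply_zero, Vcso_apply_one,
      mul_vcsoFactor_sub_mul_vcsoFactor hsum]
    exact mul_nonneg (by linarith) (vcsoFactor_add_nonneg hθ h0 h1 h2 hsum)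
  · have hsum' : x 1 + x 2 + x 0 = 1 := by linarith
    rw [ge_iff_le, ← sub_nonneg, Vcso_apply_one, Vcso_apply_two,
      mul_vcsoFactor_sub_mul_vcsoFactor hsum']
    exact mul_nonneg (by linarith) (vcsoFactor_add_nonneg hθ h1 h2 h0 hsum')

lemma sub_le_Vcso_sub (hθ : 2 / 3 ≤ θ) (hx : x ∈ G1) :
    x 0 - x 1 ≤ Vcso θ x 0 - Vcso θ x 1 := by
  obtain ⟨⟨-, h1, h2, hsum⟩, h01, h12⟩ := hx
  have hQ : 1 ≤ vcsoFactor θ (x 0) (x 1) (x 2) := by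
    have := vcsoFactor_sub_one (θ := θ) hsum
    nlinarith [mul_nonneg h1 (sub_nonneg.2 h01), mul_nonneg h2 (sub_nonneg.2 (h12.trans h01))]
  rw [Vcso_apply_zero, Vcso_apply_one, mul_vcsoFactor_sub_mul_vcsoFactor hsum]
  nlinarith [mul_nonneg (sub_nonneg.2 h01) (mul_nonneg (by linarith : 0 ≤ 3 * θ - 2) h1)]

lemma one_sub_Vcso_le (hθ : 2 / 3 ≤ θ) (hx : x ∈ G1) :
    1 - Vcso θ x 0 ≤ (1 - (3 * θ - 2) * (x 0 - x 1) / 3) * (1 - x 0) := by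
  obtain ⟨⟨h0, h1, h2, hsum⟩, h01, h12⟩ := hx
  set X := x 1 * (x 0 - x 1) + x 2 * (x 0 - x 2)
  have hX : (1 - x 0) * (x 0 - x 1) ≤ X := by
    nlinarith [mul_nonneg h2 (by linarith : 0 ≤ x 1 - x 2)]
  have hX0 : 0 ≤ (1 - x 0) * (x 0 - x 1) := mul_nonneg (by linarith) (by linarith)
  have hx0 : 1 / 3 ≤ x 0 := by linarith
  have hQ := vcsoFactor_sub_one (θ := θ) hsum
  calc 1 - Vcso θ x 0 = (1 - x 0) - (3 * θ - 2) * (x 0 * X) := by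
        rw [Vcso_apply_zero]; linear_combination (-x 0) * hQ
    _ ≤ (1 - x 0) - (3 * θ - 2) * ((1 - x 0) * (x 0 - x 1) / 3) := by
        gcongr
        · linarith
        · nlinarith
    _ = (1 - (3 * θ - 2) * (x 0 - x 1) / 3) * (1 - x 0) := by ring

end Vcso

lemma one_sub_gap_rate_nonneg {θL : ℝ} {x : EuclideanSpace ℝ (Fin 3)}
    (hθL : θL ∈ Set.Icc (2 / 3) 1) (hx : x ∈ G1) : 0 ≤ 1 - (3 * θL - 2) * (x 0 - x 1) / 3 := by
  obtain ⟨⟨-, hx1, hx2, hsum⟩, hx01, -⟩ := hx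
  nlinarith [mul_le_mul (by linarith [hθL.2] : 3 * θL - 2 ≤ 1) (by linarith : x 0 - x 1 ≤ 1)
    (sub_nonneg.2 hx01) zero_le_one]

section phiRDS

variable {θs : ℕ → ℝ} {n : ℕ} {x : EuclideanSpace ℝ (Fin 3)}

lemma phiRDS_mem_G1 (hθs : ∀ k < n, θs k ∈ Set.Icc 0 1) (hx : x ∈ G1) : phiRDS θs n x ∈ G1 := by
  induction n with
  | zero => exact hx
  | succ n ih =>
    exact Vcso_mem_G1 (hθs n n.lt_succ_self) (ih fun k hk => hθs k (hk.trans n.lt_succ_self))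

lemma sub_le_phiRDS_sub (hθs : ∀ k < n, θs k ∈ Set.Icc (2 / 3) 1) (hx : x ∈ G1) :
    x 0 - x 1 ≤ phiRDS θs n x 0 - phiRDS θs n x 1 := by
  induction n with
  | zero => exact le_rfl
  | succ n ih =>
    have hθs' : ∀ k < n, θs k ∈ Set.Icc (2 / 3) 1 := fun k hk => hθs k (hk.trans n.lt_succ_self)
    have hG1 : phiRDS θs n x ∈ G1 :=
      phiRDS_mem_G1 (fun k hk => Set.Icc_subset_Icc_left (by norm_num) (hθs' k hk)) hx
    exact (ih hθs').trans (sub_le_Vcso_sub (hθs n n.lt_succ_self).1 hG1)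

lemma one_sub_phiRDS_le {θL : ℝ} (hθL : θL ∈ Set.Icc (2 / 3) 1)
    (hθs : ∀ k < n, θs k ∈ Set.Icc θL 1) (hx : x ∈ G1) :
    1 - phiRDS θs n x 0 ≤ (1 - (3 * θL - 2) * (x 0 - x 1) / 3) ^ n * (1 - x 0) := by
  refine le_geom (u := fun k => 1 - phiRDS θs k x 0) (one_sub_gap_rate_nonneg hθL hx) n
    fun k hk => ?_
  have hθk : ∀ j < k, θs j ∈ Set.Icc (2 / 3) 1 := fun j hj =>
    Set.Icc_subset_Icc_left hθL.1 (hθs j (hj.trans hk))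
  have hG1 : phiRDS θs k x ∈ G1 :=
    phiRDS_mem_G1 (fun j hj => Set.Icc_subset_Icc_left (by norm_num) (hθk j hj)) hx
  have hgap := sub_le_phiRDS_sub hθk hx
  obtain ⟨hθ, -⟩ := hθs k hk
  have hy1 : 0 ≤ 1 - phiRDS θs k x 0 := by
    obtain ⟨⟨-, h1', h2', hsum'⟩, -, -⟩ := hG1; linarith
  calc 1 - phiRDS θs (k + 1) x 0
      ≤ (1 - (3 * θs k - 2) * (phiRDS θs k x 0 - phiRDS θs k x 1) / 3) * (1 - phiRDS θs k x 0) :=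
        one_sub_Vcso_le (hθL.1.trans hθ) hG1
    _ ≤ (1 - (3 * θL - 2) * (x 0 - x 1) / 3) * (1 - phiRDS θs k x 0) := by
        gcongr
        · exact sub_nonneg.2 hx.2.1
        · linarith [hθL.1]

end phiRDS

lemma dist_e1_le {y : EuclideanSpace ℝ (Fin 3)} (hy : y ∈ simplex2) :
    dist y e1 ≤ √2 * (1 - y 0) := by
  obtain ⟨h0, h1, h2, hsum⟩ := hy
  rw [EuclideanSpace.dist_eq, Fin.sum_univ_three, Real.sqrt_le_iff]
  simp only [e1, Real.dist_eq, sq_abs, PiLp.toLp_apply, Matrix.cons_val_zero, Matrix.cons_val_one,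
    Matrix.cons_val_two, Matrix.head_cons, Matrix.tail_cons, mul_pow, Real.sq_sqrt zero_le_two]
  constructor
  · exact mul_nonneg (Real.sqrt_nonneg 2) (by linarith)
  · nlinarith [mul_nonneg h1 h2]

lemma ProbabilityTheory.iIndepFun.measure_biInter_preimage_eq_pow {Ω β : Type*} [MeasurableSpace Ω]
    [MeasurableSpace β] {P : Measure Ω} {μ : Measure β} {Θ : ℕ → Ω → β} (hindep : iIndepFun Θ P)
    (hmeas : ∀ n, Measurable (Θ n)) (hlaw : ∀ n, P.map (Θ n) = μ) {S : Set β}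
    (hS : MeasurableSet S) (N : ℕ) :
    P (⋂ k ∈ Finset.range N, Θ k ⁻¹' S) = μ S ^ N := by
  rw [hindep.meas_biInter fun k _ => ⟨S, hS, rfl⟩]
  simp_rw [← Measure.map_apply (hmeas _) hS, hlaw, Finset.prod_const, Finset.card_range]

lemma exists_lt_measure_Icc_pos {μ : Measure ℝ} [IsProbabilityMeasure μ]
    (hμ1 : μ (Set.Icc 0 1) = 1) {a t : ℝ} (hat : a < t) (ht : t ∈ measSupport μ) :
    ∃ θL, a < θL ∧ 0 < μ (Set.Icc θL 1) := by
  refine ⟨(a + t) / 2, by linarith, ?_⟩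
  have hae : ∀ᵐ θ ∂μ, θ ∈ Set.Icc (0 : ℝ) 1 :=
    mem_ae_iff.2 ((prob_compl_eq_zero_iff measurableSet_Icc).2 hμ1)
  calc 0 < μ (Set.Ioi ((a + t) / 2)) := ht _ isOpen_Ioi (by simp only [Set.mem_Ioi]; linarith)
    _ ≤ μ (Set.Icc ((a + t) / 2) 1) := measure_mono_ae <| hae.mono fun θ hθ hθ' =>
        ⟨le_of_lt hθ', hθ.2⟩

lemma dist_phiRDS_e1_le {θs : ℕ → ℝ} {n : ℕ} {x : EuclideanSpace ℝ (Fin 3)} {θL : ℝ}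
    (hθL : θL ∈ Set.Icc (2 / 3) 1) (hθs : ∀ k < n, θs k ∈ Set.Icc θL 1) (hx : x ∈ G1) :
    dist (phiRDS θs n x) e1 ≤ √2 * (1 - (3 * θL - 2) * (x 0 - x 1) / 3) ^ n := by
  obtain ⟨⟨hx0, -, -, -⟩, -, -⟩ := id hx
  have hG1 : phiRDS θs n x ∈ G1 :=
    phiRDS_mem_G1 (fun k hk => Set.Icc_subset_Icc_left (by linarith [hθL.1]) (hθs k hk)) hx
  calc dist (phiRDS θs n x) e1 ≤ √2 * (1 - phiRDS θs n x 0) := dist_e1_le hG1.1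
    _ ≤ √2 * ((1 - (3 * θL - 2) * (x 0 - x 1) / 3) ^ n * (1 - x 0)) := by
        gcongr; exact one_sub_phiRDS_le hθL hθs hx
    _ ≤ √2 * (1 - (3 * θL - 2) * (x 0 - x 1) / 3) ^ n := by
        gcongr
        exact mul_le_of_le_one_right (pow_nonneg (one_sub_gap_rate_nonneg hθL hx) n) (by linarith)

lemma exists_forall_dist_phiRDS_e1_lt {θL ε : ℝ} (hθL : θL ∈ Set.Ioc (2 / 3) 1) (hε : 0 < ε)
    {x : EuclideanSpace ℝ (Fin 3)} (hx : x ∈ intG1) :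
    ∃ N, ∀ θs : ℕ → ℝ, (∀ k < N, θs k ∈ Set.Icc θL 1) → dist (phiRDS θs N x) e1 < ε := by
  have hxG1 : x ∈ G1 := ⟨hx.1, hx.2.1.le, hx.2.2.1.le⟩
  have hρ1 : 1 - (3 * θL - 2) * (x 0 - x 1) / 3 < 1 := by
    nlinarith [mul_pos (by linarith [hθL.1] : 0 < 3 * θL - 2) (sub_pos.2 hx.2.1)]
  obtain ⟨N, hN⟩ := exists_pow_lt_of_lt_one (div_pos hε (Real.sqrt_pos.2 two_pos)) hρ1
  refine ⟨N, fun θs hθs => ?_⟩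
  calc dist (phiRDS θs N x) e1
      ≤ √2 * (1 - (3 * θL - 2) * (x 0 - x 1) / 3) ^ N :=
        dist_phiRDS_e1_le (Set.Ioc_subset_Icc_self hθL) hθs hxG1
    _ < ε := (lt_div_iff₀' (Real.sqrt_pos.2 two_pos)).1 hN

theorem reach_e1_with_positive_probability_general (μ : Measure ℝ) [IsProbabilityMeasure μ] (hμ1 : μ (Set.Icc 0 1) = 1)
    (hsupp : (measSupport μ ∩ Set.Ioc (2/3) 1).Nonempty)
    {Ω : Type*} [MeasurableSpace Ω] (P : Measure Ω)
    (Θ : ℕ → Ω → ℝ) (hmeas : ∀ n, Measurable (Θ n))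
    (hindep : iIndepFun Θ P)
    (hlaw : ∀ n, Measure.map (Θ n) P = μ) :
    ∀ ε > (0:ℝ), ∀ x ∈ intG1, ∃ N : ℕ,
      0 < P {ω | dist (phiRDS (fun k => Θ k ω) N x) e1 < ε} := by
  intro ε hε x hx
  obtain ⟨t, ht, ht23, -⟩ := hsupp
  obtain ⟨θL, hθL, hμpos⟩ := exists_lt_measure_Icc_pos hμ1 ht23 ht
  have hθL1 : θL ≤ 1 := Set.nonempty_Icc.1 (nonempty_of_measure_ne_zero hμpos.ne')
  obtain ⟨N, hN⟩ := exists_forall_dist_phiRDS_e1_lt ⟨hθL, hθL1⟩ hε hx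
  refine ⟨N, ?_⟩
  calc 0 < μ (Set.Icc θL 1) ^ N := ENNReal.pow_pos hμpos N
    _ = P (⋂ k ∈ Finset.range N, Θ k ⁻¹' Set.Icc θL 1) :=
        (hindep.measure_biInter_preimage_eq_pow hmeas hlaw measurableSet_Icc N).symm
    _ ≤ _ := measure_mono fun ω hω => hN _ (by simpa using hω)

/-- Lemma 2.3, second part. -/
theorem reach_e1_with_positive_probability (μ : Measure ℝ) [IsProbabilityMeasure μ] (hμ1 : μ (Set.Icc 0 1) = 1)
    (hsupp : (measSupport μ ∩ Set.Ioc (2/3) 1).Nonempty)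
    {Ω : Type*} [MeasurableSpace Ω] (P : Measure Ω) [IsProbabilityMeasure P]
    (Θ : ℕ → Ω → ℝ) (hmeas : ∀ n, Measurable (Θ n))
    (hindep : iIndepFun Θ P)
    (hlaw : ∀ n, Measure.map (Θ n) P = μ) :
    ∀ ε > (0:ℝ), ∀ x ∈ intG1, ∃ N : ℕ,
      0 < P {ω | dist (phiRDS (fun k => Θ k ω) N x) e1 < ε} :=
  reach_e1_with_positive_probability_general μ hμ1 hsupp P Θ hmeas hindep hlaw
end
end

section
/- Regard V_θ as a polynomial map ℝ³ → ℝ³ defined by the same formulas. For every θ ∈ [0,1] and every v ∈ ℝ³ with v₁ + v₂ + v₃ = 0, the Fréchet derivative of V_θ at the point C = (1/3,1/3,1/3) applied to v equals (1/3 + θ)·v, and the Fréchet derivative of V_θ at the point e₁ = (1,0,0) applied to v equals 3(1−θ)·v. (In particular, on the tangent space of the simplex, DV_θ(C) and DV_θ(e₁) are the scalars 1/3+θ and 3(1−θ) respectively.) -/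
open MeasureTheory ProbabilityTheory Filter Topology
open scoped ENNReal

noncomputable section

/-!
Every coordinate of `V_θ` is the same cubic `cubicComp θ` evaluated at a cyclic shift of `x`,
so the Jacobian is read off from one gradient. At `C` it is `(1/3 + θ) I` plus a multiple of
the all-ones matrix, and at `e₁` it is `3(1 - θ) I` plus `3θ` times the matrix with first row
`(1, 1, 1)`; both correction terms kill vectors with `v₁ + v₂ + v₃ = 0`.
-/
def cubicComp (θ a b c : ℝ) : ℝ :=
  a * (a ^ 2 + 3 * θ * a * (b + c) + 3 * (1 - θ) * (b ^ 2 + c ^ 2) + 2 * b * c)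

def cubicCompDeriv (θ a b c u v w : ℝ) : ℝ :=
  (3 * a ^ 2 + 6 * θ * a * (b + c) + 3 * (1 - θ) * (b ^ 2 + c ^ 2) + 2 * b * c) * u
    + a * (3 * θ * a + 6 * (1 - θ) * b + 2 * c) * v
    + a * (3 * θ * a + 6 * (1 - θ) * c + 2 * b) * w

theorem hasDerivAt_cubicComp_line (θ a b c u v w : ℝ) :
    HasDerivAt (fun t => cubicComp θ (a + t * u) (b + t * v) (c + t * w))
      (cubicCompDeriv θ a b c u v w) 0 := by
  have line (x₀ d : ℝ) : HasDerivAt (fun t : ℝ => x₀ + t * d) d 0 := by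
    simpa using ((hasDerivAt_id (0 : ℝ)).mul_const d).const_add x₀
  have ha := line a u
  have hb := line b v
  have hc := line c w
  refine (ha.mul ((((ha.pow 2).add ((ha.const_mul (3 * θ)).mul (hb.add hc))).add
    (((hb.pow 2).add (hc.pow 2)).const_mul (3 * (1 - θ)))).add
      ((hb.const_mul 2).mul hc))).congr_deriv ?_
  simp only [Pi.add_apply, Pi.mul_apply, Pi.pow_apply, cubicCompDeriv]
  push_cast
  ring

theorem fderiv_piLp_apply {𝕜 ι H : Type*} {E : ι → Type*} [NontriviallyNormedField 𝕜]
    [NormedAddCommGroup H] [NormedSpace 𝕜 H] [∀ i, NormedAddCommGroup (E i)]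
    [∀ i, NormedSpace 𝕜 (E i)] [Fintype ι] {p : ℝ≥0∞} [Fact (1 ≤ p)] {F : H → PiLp p E} {y : H}
    (hF : DifferentiableAt 𝕜 F y) (v : H) (i : ι) :
    fderiv 𝕜 F y v i = fderiv 𝕜 (fun x => F x i) y v := by
  have h := (PiLp.hasFDerivAt_apply p (F y) i).comp y hF.hasFDerivAt
  exact (congrArg (· v) h.fderiv).symm

theorem Vcso_apply (θ : ℝ) (x : EuclideanSpace ℝ (Fin 3)) (i : Fin 3) :
    Vcso θ x i = cubicComp θ (x i) (x (i + 1)) (x (i + 2)) := by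
  fin_cases i <;> rfl

theorem differentiable_Vcso_apply (θ : ℝ) (i : Fin 3) :
    Differentiable ℝ (fun x : EuclideanSpace ℝ (Fin 3) => Vcso θ x i) := by
  simp only [Vcso_apply, cubicComp]
  fun_prop

theorem fderiv_Vcso_apply (θ : ℝ) (p v : EuclideanSpace ℝ (Fin 3)) (i : Fin 3) :
    fderiv ℝ (Vcso θ) p v i =
      cubicCompDeriv θ (p i) (p (i + 1)) (p (i + 2)) (v i) (v (i + 1)) (v (i + 2)) := by
  have hV : Differentiable ℝ (Vcso θ) := (differentiable_piLp 2).2 (differentiable_Vcso_apply θ)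
  rw [fderiv_piLp_apply (hV p), ← (differentiable_Vcso_apply θ i p).lineDeriv_eq_fderiv]
  refine HasLineDerivAt.lineDeriv ?_
  simpa only [HasLineDerivAt, Vcso_apply, PiLp.add_apply, PiLp.smul_apply, smul_eq_mul]
    using hasDerivAt_cubicComp_line θ (p i) (p (i + 1)) (p (i + 2)) (v i) (v (i + 1)) (v (i + 2))

theorem fderiv_Vcso_Cpt (θ : ℝ) (v : EuclideanSpace ℝ (Fin 3)) :
    fderiv ℝ (Vcso θ) Cpt v = (1 / 3 + θ) • v + ((8 / 3 - θ) * (v 0 + v 1 + v 2)) • Cpt := by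
  ext i
  fin_cases i <;>
    simp only [fderiv_Vcso_apply, cubicCompDeriv, Cpt, PiLp.add_apply, PiLp.smul_apply, smul_eq_mul,
      Fin.zero_eta, Fin.mk_one, Fin.reduceFinMk, Fin.isValue, Fin.reduceAdd, Matrix.cons_val_zero,
      Matrix.cons_val_one, Matrix.cons_val] <;>
    ring

theorem fderiv_Vcso_e1 (θ : ℝ) (v : EuclideanSpace ℝ (Fin 3)) :
    fderiv ℝ (Vcso θ) e1 v = (3 * (1 - θ)) • v + (3 * θ * (v 0 + v 1 + v 2)) • e1 := by
  ext i
  fin_cases i <;>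
    simp only [fderiv_Vcso_apply, cubicCompDeriv, e1, PiLp.add_apply, PiLp.smul_apply, smul_eq_mul,
      Fin.zero_eta, Fin.mk_one, Fin.reduceFinMk, Fin.isValue, Fin.reduceAdd, Matrix.cons_val_zero,
      Matrix.cons_val_one, Matrix.cons_val] <;>
    ring

/-- On the tangent space of the simplex, DV_θ(C) is multiplication by 1/3 + θ and
DV_θ(e₁) is multiplication by 3(1-θ). -/
theorem fderiv_at_C_and_e1 :
    ∀ θ ∈ Set.Icc (0:ℝ) 1, ∀ v : EuclideanSpace ℝ (Fin 3), v 0 + v 1 + v 2 = 0 →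
      fderiv ℝ (Vcso θ) Cpt v = (1/3 + θ) • v ∧
      fderiv ℝ (Vcso θ) e1 v = (3 * (1 - θ)) • v := by
  intro θ _ v hv
  simp [fderiv_Vcso_Cpt, fderiv_Vcso_e1, hv]
end
end
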